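/- Let c ∈ ℝ and Ū ∈ ℝ². On the open set O = {D ∈ ℝ² : |D₁+D₂| < 1}, let u(D) ∈ ℝ² be the unique solution of the linear system −(u₁ − Ū₁) + (u₂ − c)(D₁+D₂) − D₁ = 0, −(u₂ − Ū₂) + (u₁ − c)(D₁+D₂) − D₂ = 0, and define S(D) = 𝓛(u(D), D, Ū). Then S is differentiable on O and its gradient satisfies ∇S(D) = 𝔔_c(u(D)) for every D ∈ O. -/

import Mathlib

/-! The envelope theorem: the DtP system says exactly that `∂_U 𝓛(u(D), D, Ū) = 0`, so in the chain
rule for `D ↦ 𝓛(u(D), D, Ū)` only the partial gradient `∂_D 𝓛 = 𝔔_c(U)` survives. Differentiability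
of `u` comes for free: for `|D₁ + D₂| < 1` the system has determinant `1 - (D₁ + D₂)² ≠ 0`, so `u`
agrees near `D` with its explicit (rational) solution. -/

/-- The toy-model map `𝔔_c : ℝ² → ℝ²`, `(𝔔_c(U))_i = (U₁−c)(U₂−c) − (U_i−c)`. -/
def Qc (c : ℝ) (U : ℝ × ℝ) : ℝ × ℝ :=
  ((U.1 - c) * (U.2 - c) - (U.1 - c), (U.1 - c) * (U.2 - c) - (U.2 - c))

/-- The toy-model pre-dual Lagrangian
`𝓛(U,D,Ū) = (U₁−c)(U₂−c)(D₁+D₂) − (U₁−c)D₁ − (U₂−c)D₂ − ½|U−Ū|²`. -/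
noncomputable def Ltoy (c : ℝ) (U D Ub : ℝ × ℝ) : ℝ :=
  (U.1 - c) * (U.2 - c) * (D.1 + D.2) - (U.1 - c) * D.1 - (U.2 - c) * D.2
    - (1 / 2) * ((U.1 - Ub.1) ^ 2 + (U.2 - Ub.2) ^ 2)

open ContinuousLinearMap Topology

theorem HasFDerivAt.comp_prodMk_of_comp_inl_eq_zero {𝕜 E F G : Type*} [NontriviallyNormedField 𝕜]
    [NormedAddCommGroup E] [NormedSpace 𝕜 E] [NormedAddCommGroup F] [NormedSpace 𝕜 F]
    [NormedAddCommGroup G] [NormedSpace 𝕜 G] {f : E × F → G} {f' : E × F →L[𝕜] G}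
    {v : F → E} {v' : F →L[𝕜] E} {x : F} (hf : HasFDerivAt f f' (v x, x))
    (hv : HasFDerivAt v v' x) (hcrit : f' ∘L inl 𝕜 E F = 0) :
    HasFDerivAt (fun y => f (v y, y)) (f' ∘L inr 𝕜 E F) x := by
  have hprod : HasFDerivAt (fun y => (v y, y)) (v'.prod (.id 𝕜 F)) x :=
    hv.prodMk (hasFDerivAt_id x)
  refine (hf.comp (f := fun y => (v y, y)) x hprod).congr_fderiv <|
    ContinuousLinearMap.ext fun h => ?_
  calc f' (v' h, h) = (f' ∘L inl 𝕜 E F) (v' h) + (f' ∘L inr 𝕜 E F) h :=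
        (f'.comp_inl_add_comp_inr _).symm
    _ = (f' ∘L inr 𝕜 E F) h := by rw [hcrit, zero_apply, zero_add]

def dotCLM (w : ℝ × ℝ) : ℝ × ℝ →L[ℝ] ℝ :=
  w.1 • fst ℝ ℝ ℝ + w.2 • snd ℝ ℝ ℝ

@[simp] theorem dotCLM_apply (w h : ℝ × ℝ) : dotCLM w h = w.1 * h.1 + w.2 * h.2 := rfl

/-- The partial gradient of `Ltoy c U D Ub` in `U`; the DtP linear system is `gradULtoy = 0`. -/
def gradULtoy (c : ℝ) (U D Ub : ℝ × ℝ) : ℝ × ℝ :=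
  (-(U.1 - Ub.1) + (U.2 - c) * (D.1 + D.2) - D.1,
   -(U.2 - Ub.2) + (U.1 - c) * (D.1 + D.2) - D.2)

theorem hasFDerivAt_Ltoy (c : ℝ) (Ub : ℝ × ℝ) (p : (ℝ × ℝ) × (ℝ × ℝ)) :
    HasFDerivAt (fun q : (ℝ × ℝ) × (ℝ × ℝ) => Ltoy c q.1 q.2 Ub)
      ((dotCLM (gradULtoy c p.1 p.2 Ub)).coprod (dotCLM (Qc c p.1))) p := by
  have hU₁ := (hasFDerivAt_fst (𝕜 := ℝ) (p := p)).fst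
  have hU₂ := (hasFDerivAt_fst (𝕜 := ℝ) (p := p)).snd
  have hD₁ := (hasFDerivAt_snd (𝕜 := ℝ) (p := p)).fst
  have hD₂ := (hasFDerivAt_snd (𝕜 := ℝ) (p := p)).snd
  have hL := (((((hU₁.sub_const c).mul (hU₂.sub_const c)).mul (hD₁.add hD₂)).sub
    ((hU₁.sub_const c).mul hD₁)).sub ((hU₂.sub_const c).mul hD₂)).sub
    ((((hU₁.sub_const Ub.1).pow 2).add ((hU₂.sub_const Ub.2).pow 2)).const_mul (1 / 2 : ℝ))
  refine hL.congr_fderiv (ContinuousLinearMap.ext fun q => ?_)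
  simp only [coprod_apply, dotCLM_apply, gradULtoy, Qc, sub_apply, add_apply, smul_apply,
    comp_apply, coe_fst', coe_snd', smul_eq_mul, Pi.mul_apply, Pi.add_apply, nsmul_eq_mul]
  ring

noncomputable def dtpSolution (c : ℝ) (Ub D : ℝ × ℝ) : ℝ × ℝ :=
  (c + (Ub.1 - c - D.1 + (D.1 + D.2) * (Ub.2 - c - D.2)) / (1 - (D.1 + D.2) ^ 2),
   c + (Ub.2 - c - D.2 + (D.1 + D.2) * (Ub.1 - c - D.1)) / (1 - (D.1 + D.2) ^ 2))

theorem one_sub_sq_ne_zero_of_abs_lt_one {s : ℝ} (hs : |s| < 1) : 1 - s ^ 2 ≠ 0 := by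
  have : s ^ 2 < 1 := by rwa [sq_lt_one_iff_abs_lt_one]
  linarith

theorem eq_dtpSolution_of_gradULtoy_eq_zero {c : ℝ} {U D Ub : ℝ × ℝ} (hD : |D.1 + D.2| < 1)
    (hU : gradULtoy c U D Ub = 0) : U = dtpSolution c Ub D := by
  have hden := one_sub_sq_ne_zero_of_abs_lt_one hD
  obtain ⟨h₁, h₂⟩ := Prod.ext_iff.mp hU
  simp only [gradULtoy, Prod.fst_zero, Prod.snd_zero] at h₁ h₂
  ext
  · rw [dtpSolution, ← sub_eq_iff_eq_add', eq_div_iff hden]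
    linear_combination -h₁ - (D.1 + D.2) * h₂
  · rw [dtpSolution, ← sub_eq_iff_eq_add', eq_div_iff hden]
    linear_combination -h₂ - (D.1 + D.2) * h₁

theorem differentiableAt_dtpSolution (c : ℝ) (Ub : ℝ × ℝ) {D : ℝ × ℝ} (hD : |D.1 + D.2| < 1) :
    DifferentiableAt ℝ (dtpSolution c Ub) D := by
  have hden := one_sub_sq_ne_zero_of_abs_lt_one hD
  unfold dtpSolution
  fun_prop (disch := exact hden)

theorem hasFDerivAt_Ltoy_comp_of_gradULtoy_eq_zero {c : ℝ} {Ub D : ℝ × ℝ} {v : ℝ × ℝ → ℝ × ℝ}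
    (hv : DifferentiableAt ℝ v D) (hcrit : gradULtoy c (v D) D Ub = 0) :
    HasFDerivAt (fun D' => Ltoy c (v D') D' Ub) (dotCLM (Qc c (v D))) D := by
  have h := (hasFDerivAt_Ltoy c Ub (v D, D)).comp_prodMk_of_comp_inl_eq_zero hv.hasFDerivAt
    (by rw [coprod_comp_inl, hcrit]; ext <;> simp)
  rwa [coprod_comp_inr] at h

/-- on the open set `O = {|D₁+D₂| < 1}`, if `u(D)` solves the DtP linear
system, then `S(D) = 𝓛(u(D),D,Ū)` is differentiable on `O` with gradient
`∇S(D) = 𝔔_c(u(D))` (envelope theorem). -/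
theorem stmt14 (c : ℝ) (Ub : ℝ × ℝ) (u : ℝ × ℝ → ℝ × ℝ)
    (hu : ∀ D : ℝ × ℝ, |D.1 + D.2| < 1 →
      (-((u D).1 - Ub.1) + ((u D).2 - c) * (D.1 + D.2) - D.1 = 0 ∧
       -((u D).2 - Ub.2) + ((u D).1 - c) * (D.1 + D.2) - D.2 = 0)) :
    ∀ D : ℝ × ℝ, |D.1 + D.2| < 1 →
      DifferentiableAt ℝ (fun D' => Ltoy c (u D') D' Ub) D ∧
      ∀ h : ℝ × ℝ, fderiv ℝ (fun D' => Ltoy c (u D') D' Ub) D h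
        = (Qc c (u D)).1 * h.1 + (Qc c (u D)).2 * h.2 := by
  intro D hD
  have hcrit : ∀ D' : ℝ × ℝ, |D'.1 + D'.2| < 1 → gradULtoy c (u D') D' Ub = 0 :=
    fun D' hD' => Prod.ext (hu D' hD').1 (hu D' hD').2
  have hO : {D' : ℝ × ℝ | |D'.1 + D'.2| < 1} ∈ 𝓝 D :=
    (isOpen_lt (continuous_fst.add continuous_snd).abs continuous_const).mem_nhds hD
  have hu_eq : u =ᶠ[𝓝 D] dtpSolution c Ub := by
    filter_upwards [hO] with D' hD' using eq_dtpSolution_of_gradULtoy_eq_zero hD' (hcrit D' hD')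
  have hS := hasFDerivAt_Ltoy_comp_of_gradULtoy_eq_zero
    ((differentiableAt_dtpSolution c Ub hD).congr_of_eventuallyEq hu_eq) (hcrit D hD)
  exact ⟨hS.differentiableAt, fun h => by rw [hS.fderiv, dotCLM_apply]⟩
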